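/- Universal representation of the discounted asset price for American puts: there exists a unique (up to a.s. equality at each time) adapted, square-integrable process K = (K_t)_{t=0,...,N} such that, for every t ∈ {0,...,N}, -(1+r)^{-t} P_t = E_t[ Σ_{u=t}^{N-1} (r/(1+r)) (1+r)^{-u} · max_{t≤v≤u} (-K_v) + (1+r)^{-N} · max_{t≤v≤N} (-K_v) ] a.s. (empty sums are 0). -/

import Mathlib

/-!
Backward induction in `t`. Once `K` is fixed after time `t`, the integrand at time `t` is a
function `f(ℓ, ω)` of the level `ℓ = -K_t` whose slopes in `ℓ` lie in `[a, c]` with `a > 0` (the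
term `u = t` is linear in `ℓ`, the others are running maxima), so it suffices to solve
`E_t[f(L, ·)] = X` uniquely for `F_t`-measurable `L`. Monotonicity and translation invariance
transfer the slope bounds to `q ↦ E_t[f(q, ·)](ω)` on the rationals outside a null set, and
extending from the rationals gives a version `g(ℓ, ω)` that is continuous and strictly increasing
in `ℓ`. The zero-one law (for finitely-valued `L`) and monotone convergence give
`E_t[f(L, ·)] = g(L, ·)` a.s., so `L = g(·, ω)⁻¹(X)` is the unique solution.
-/

open MeasureTheory Filter

/-- Running maximum `max_{t ≤ v ≤ u} L v ω` (intended for `t ≤ u`). -/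
noncomputable def runMax {Ω : Type*} (L : ℕ → Ω → ℝ) (t u : ℕ) (ω : Ω) : ℝ :=
  (Finset.Icc t u).fold max (L t ω) fun v => L v ω

/-- Running minimum `min_{t ≤ v ≤ u} K v ω` (intended for `t ≤ u`). -/
noncomputable def runMin {Ω : Type*} (K : ℕ → Ω → ℝ) (t u : ℕ) (ω : Ω) : ℝ :=
  (Finset.Icc t u).fold min (K t ω) fun v => K v ω

/-- A discrete-time nonlinear expectation on the horizon `{0, ..., N}`:
a family of maps `E t` sending square-integrable `F N`-measurable random
variables to square-integrable `F t`-measurable random variables, satisfying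
monotonicity, strict monotonicity, translation invariance, the tower property,
the zero-one law and monotone convergence. -/
structure NLExp {Ω : Type*} {m0 : MeasurableSpace Ω} (μ : Measure Ω)
    (F : Filtration ℕ m0) (N : ℕ) where
  E : ℕ → (Ω → ℝ) → Ω → ℝ
  adapted : ∀ t, t ≤ N → ∀ ξ : Ω → ℝ, StronglyMeasurable[F N] ξ → MemLp ξ 2 μ →
    StronglyMeasurable[F t] (E t ξ)
  sqInt : ∀ t, t ≤ N → ∀ ξ : Ω → ℝ, StronglyMeasurable[F N] ξ → MemLp ξ 2 μ →
    MemLp (E t ξ) 2 μ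
  mono : ∀ t, t ≤ N → ∀ ξ η : Ω → ℝ, StronglyMeasurable[F N] ξ → MemLp ξ 2 μ →
    StronglyMeasurable[F N] η → MemLp η 2 μ → ξ ≤ᵐ[μ] η → E t ξ ≤ᵐ[μ] E t η
  strictMono : ∀ t, t ≤ N → ∀ ξ η : Ω → ℝ, StronglyMeasurable[F N] ξ → MemLp ξ 2 μ →
    StronglyMeasurable[F N] η → MemLp η 2 μ → ξ ≤ᵐ[μ] η →
    0 < μ {ω | ξ ω < η ω} → 0 < μ {ω | E t ξ ω < E t η ω}
  translation : ∀ t, t ≤ N → ∀ ξ ζ : Ω → ℝ, StronglyMeasurable[F N] ξ → MemLp ξ 2 μ →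
    StronglyMeasurable[F t] ζ → MemLp ζ 2 μ → E t (ξ + ζ) =ᵐ[μ] E t ξ + ζ
  tower : ∀ s t, s ≤ t → t ≤ N → ∀ ξ : Ω → ℝ, StronglyMeasurable[F N] ξ → MemLp ξ 2 μ →
    E s (E t ξ) =ᵐ[μ] E s ξ
  zeroOne : ∀ t, t ≤ N → ∀ ξ η : Ω → ℝ, StronglyMeasurable[F N] ξ → MemLp ξ 2 μ →
    StronglyMeasurable[F N] η → MemLp η 2 μ → ∀ A : Set Ω, MeasurableSet[F t] A →
    E t (A.indicator ξ + Aᶜ.indicator η) =ᵐ[μ]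
      A.indicator (E t ξ) + Aᶜ.indicator (E t η)
  monoConv : ∀ t, t ≤ N → ∀ (ξs : ℕ → Ω → ℝ) (ξ : Ω → ℝ),
    (∀ n, StronglyMeasurable[F N] (ξs n)) → (∀ n, MemLp (ξs n) 2 μ) →
    StronglyMeasurable[F N] ξ → MemLp ξ 2 μ →
    (∀ᵐ ω ∂μ, (Monotone fun n => ξs n ω) ∨ (Antitone fun n => ξs n ω)) →
    (∀ᵐ ω ∂μ, Tendsto (fun n => ξs n ω) atTop (nhds (ξ ω))) →
    ∀ᵐ ω ∂μ, Tendsto (fun n => E t (ξs n) ω) atTop (nhds (E t ξ ω))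

section Slopes

def SlopesBetweenOn (a c : ℝ) (H : ℝ → ℝ) (s : Set ℝ) : Prop :=
  ∀ ⦃x⦄, x ∈ s → ∀ ⦃y⦄, y ∈ s → x ≤ y → a * (y - x) ≤ H y - H x ∧ H y - H x ≤ c * (y - x)

variable {a c : ℝ} {H : ℝ → ℝ} {s : Set ℝ}

namespace SlopesBetweenOn

theorem monotoneOn (ha : 0 ≤ a) (h : SlopesBetweenOn a c H s) : MonotoneOn H s :=
  fun _ hx _ hy hxy => by nlinarith [(h hx hy hxy).1]

theorem lipschitzOnWith (ha : 0 ≤ a) (h : SlopesBetweenOn a c H s) :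
    LipschitzOnWith c.toNNReal H s := by
  have key : ∀ x ∈ s, ∀ y ∈ s, x ≤ y → |H y - H x| ≤ c.toNNReal * |y - x| := by
    intro x hx y hy hxy
    obtain ⟨h₁, h₂⟩ := h hx hy hxy
    rw [abs_of_nonneg (by nlinarith), abs_of_nonneg (sub_nonneg.2 hxy)]
    exact h₂.trans (mul_le_mul_of_nonneg_right (Real.le_coe_toNNReal c) (sub_nonneg.2 hxy))
  refine LipschitzOnWith.of_dist_le_mul fun x hx y hy => ?_
  rw [Real.dist_eq, Real.dist_eq]
  rcases le_total x y with hxy | hyx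
  · rw [abs_sub_comm, abs_sub_comm x]; exact key x hx y hy hxy
  · exact key y hy x hx hyx

theorem add {a' c' : ℝ} {H' : ℝ → ℝ} (h : SlopesBetweenOn a c H s)
    (h' : SlopesBetweenOn a' c' H' s) : SlopesBetweenOn (a + a') (c + c') (H + H') s :=
  fun _ hx _ hy hxy => by
    obtain ⟨h₁, h₂⟩ := h hx hy hxy
    obtain ⟨h₁', h₂'⟩ := h' hx hy hxy
    simp only [Pi.add_apply]
    constructor <;> linarith

theorem const_mul {w : ℝ} (hw : 0 ≤ w) (h : SlopesBetweenOn a c H s) :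
    SlopesBetweenOn (w * a) (w * c) (fun x => w * H x) s :=
  fun _ hx _ hy hxy => by
    obtain ⟨h₁, h₂⟩ := h hx hy hxy
    constructor <;> nlinarith

theorem sum {ι : Type*} {I : Finset ι} {a c : ι → ℝ} {H : ι → ℝ → ℝ}
    (h : ∀ i ∈ I, SlopesBetweenOn (a i) (c i) (H i) s) :
    SlopesBetweenOn (∑ i ∈ I, a i) (∑ i ∈ I, c i) (fun x => ∑ i ∈ I, H i x) s := by
  classical
  induction I using Finset.induction_on with
  | empty => intro _ _ _ _ _; simp
  | insert i I hi ih =>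
    simp only [Finset.sum_insert hi]
    exact (h i (Finset.mem_insert_self i I)).add (ih fun j hj => h j (Finset.mem_insert_of_mem hj))

theorem lower_le_upper (h : SlopesBetweenOn a c H Set.univ) : a ≤ c := by
  have := h (Set.mem_univ 0) (Set.mem_univ 1) zero_le_one
  linarith [this.1, this.2]

theorem strictMono (ha : 0 < a) (h : SlopesBetweenOn a c H Set.univ) : StrictMono H :=
  fun x y hxy => by nlinarith [(h (Set.mem_univ x) (Set.mem_univ y) hxy.le).1]

theorem continuous (ha : 0 ≤ a) (h : SlopesBetweenOn a c H Set.univ) : Continuous H :=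
  continuousOn_univ.1 (h.lipschitzOnWith ha).continuousOn

theorem surjective (ha : 0 < a) (h : SlopesBetweenOn a c H Set.univ) : Function.Surjective H := by
  refine (h.continuous ha.le).surjective ?_ ?_
  · refine tendsto_atTop_mono' atTop ?_ (tendsto_atTop_add_const_left _ (H 0)
      (tendsto_id.const_mul_atTop ha))
    filter_upwards [eventually_ge_atTop 0] with x hx
    show H 0 + a * x ≤ H x
    linarith [(h (Set.mem_univ 0) (Set.mem_univ x) hx).1]
  · refine tendsto_atBot_mono' atBot ?_ (tendsto_atBot_add_const_left _ (H 0)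
      (tendsto_id.const_mul_atBot ha))
    filter_upwards [eventually_le_atBot 0] with x hx
    show H x ≤ H 0 + a * x
    linarith [(h (Set.mem_univ x) (Set.mem_univ 0) hx).1]

theorem mul_abs_sub_le (ha : 0 ≤ a) (h : SlopesBetweenOn a c H Set.univ) (x y : ℝ) :
    a * |y - x| ≤ |H y - H x| := by
  rcases le_total x y with hxy | hyx
  · have := (h (Set.mem_univ x) (Set.mem_univ y) hxy).1
    rw [abs_of_nonneg (sub_nonneg.2 hxy), abs_of_nonneg (by nlinarith)]
    exact this
  · have := (h (Set.mem_univ y) (Set.mem_univ x) hyx).1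
    rw [abs_sub_comm, abs_of_nonneg (sub_nonneg.2 hyx), abs_sub_comm,
      abs_of_nonneg (by nlinarith)]
    exact this

end SlopesBetweenOn

end Slopes

section Dyadic

open Topology

theorem tendsto_inv_two_pow_atTop : Tendsto (fun n : ℕ => ((2 : ℝ) ^ n)⁻¹) atTop (𝓝 0) :=
  tendsto_inv_atTop_zero.comp (tendsto_pow_atTop_atTop_of_one_lt one_lt_two)

noncomputable def dyadicUp (n : ℕ) (x : ℝ) : ℝ := ⌈2 ^ n * x⌉ / 2 ^ n

variable {n : ℕ} {x y : ℝ}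

theorem dyadicUp_mem_range_ratCast (n : ℕ) (x : ℝ) :
    dyadicUp n x ∈ Set.range ((↑) : ℚ → ℝ) :=
  ⟨⌈2 ^ n * x⌉ / 2 ^ n, by simp [dyadicUp]⟩

theorem le_dyadicUp (n : ℕ) (x : ℝ) : x ≤ dyadicUp n x := by
  rw [dyadicUp, le_div_iff₀ (by positivity), mul_comm]
  exact Int.le_ceil _

theorem dyadicUp_le (n : ℕ) (x : ℝ) : dyadicUp n x ≤ x + (2 ^ n)⁻¹ := by
  rw [dyadicUp, div_le_iff₀ (by positivity), add_mul, inv_mul_cancel₀ (by positivity), mul_comm]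
  exact (Int.ceil_lt_add_one _).le

theorem dyadicUp_mono (hxy : x ≤ y) : dyadicUp n x ≤ dyadicUp n y := by
  unfold dyadicUp
  gcongr

theorem antitone_dyadicUp (x : ℝ) : Antitone fun n => dyadicUp n x := by
  refine antitone_nat_of_succ_le fun n => ?_
  have h : ⌈2 ^ (n + 1) * x⌉ ≤ 2 * ⌈2 ^ n * x⌉ := by
    rw [Int.ceil_le, pow_succ]
    push_cast
    linarith [Int.le_ceil (2 ^ n * x)]
  rw [dyadicUp, dyadicUp, div_le_div_iff₀ (by positivity) (by positivity)]
  calc (⌈2 ^ (n + 1) * x⌉ : ℝ) * 2 ^ n ≤ (2 * ⌈2 ^ n * x⌉ : ℤ) * 2 ^ n := by gcongr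
    _ = ⌈2 ^ n * x⌉ * 2 ^ (n + 1) := by push_cast; ring

theorem tendsto_dyadicUp (x : ℝ) : Tendsto (fun n => dyadicUp n x) atTop (𝓝 x) := by
  have := tendsto_const_nhds (x := x).add tendsto_inv_two_pow_atTop
  rw [add_zero] at this
  exact tendsto_of_tendsto_of_tendsto_of_le_of_le tendsto_const_nhds this
    (le_dyadicUp · x) (dyadicUp_le · x)

noncomputable def dyadicInf (H : ℝ → ℝ) (x : ℝ) : ℝ := ⨅ n, H (dyadicUp n x)

variable {a c : ℝ} {H : ℝ → ℝ}

theorem tendsto_dyadicInf (ha : 0 ≤ a) (h : SlopesBetweenOn a c H (Set.range ((↑) : ℚ → ℝ)))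
    (x : ℝ) : Tendsto (fun n => H (dyadicUp n x)) atTop (𝓝 (dyadicInf H x)) := by
  have hmono := h.monotoneOn ha
  refine tendsto_atTop_ciInf (fun m n hmn => hmono (dyadicUp_mem_range_ratCast _ _)
    (dyadicUp_mem_range_ratCast _ _) (antitone_dyadicUp x hmn)) ⟨H ⌊x⌋, ?_⟩
  rintro _ ⟨n, rfl⟩
  exact hmono ⟨⌊x⌋, by simp⟩ (dyadicUp_mem_range_ratCast _ _)
    ((Int.floor_le x).trans (le_dyadicUp n x))

theorem dyadicInf_eq (ha : 0 ≤ a) (h : SlopesBetweenOn a c H (Set.range ((↑) : ℚ → ℝ)))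
    (hx : x ∈ Set.range ((↑) : ℚ → ℝ)) : dyadicInf H x = H x := by
  have hcont := (h.lipschitzOnWith ha).continuousOn x hx
  refine tendsto_nhds_unique (tendsto_dyadicInf ha h x) (hcont.tendsto.comp ?_)
  exact tendsto_nhdsWithin_iff.2
    ⟨tendsto_dyadicUp x, Eventually.of_forall (dyadicUp_mem_range_ratCast · x)⟩

theorem slopesBetweenOn_dyadicInf (ha : 0 ≤ a)
    (h : SlopesBetweenOn a c H (Set.range ((↑) : ℚ → ℝ))) :
    SlopesBetweenOn a c (dyadicInf H) Set.univ := by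
  intro x _ y _ hxy
  have hslope n := h (dyadicUp_mem_range_ratCast n x) (dyadicUp_mem_range_ratCast n y)
    (dyadicUp_mono hxy)
  have hdiff := (tendsto_dyadicUp y).sub (tendsto_dyadicUp x)
  have hH := (tendsto_dyadicInf ha h y).sub (tendsto_dyadicInf ha h x)
  exact ⟨le_of_tendsto_of_tendsto' (hdiff.const_mul a) hH fun n => (hslope n).1,
    le_of_tendsto_of_tendsto' hH (hdiff.const_mul c) fun n => (hslope n).2⟩

end Dyadic

section TruncDyadic

open Topology

noncomputable def truncFloor (n : ℕ) (y : ℝ) : ℕ := min ⌊2 ^ n * y⌋₊ (n * 2 ^ n)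

/-- `x` rounded towards zero to the grid `2⁻ⁿ ℤ` and truncated to `[-n, n]`: at most one of the
two floors is nonzero. -/
noncomputable def truncDyadic (n : ℕ) (x : ℝ) : ℝ :=
  ((truncFloor n x : ℝ) - truncFloor n (-x)) / 2 ^ n

variable {n : ℕ} {x : ℝ}

theorem truncDyadic_neg (n : ℕ) (x : ℝ) : truncDyadic n (-x) = -truncDyadic n x := by
  simp only [truncDyadic, neg_neg]
  ring

theorem truncDyadic_of_nonneg (hx : 0 ≤ x) : truncDyadic n x = truncFloor n x / 2 ^ n := by
  have : truncFloor n (-x) = 0 := by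
    rw [truncFloor, Nat.floor_of_nonpos (mul_nonpos_of_nonneg_of_nonpos (by positivity)
      (neg_nonpos.2 hx)), Nat.zero_min]
  simp [truncDyadic, this]

theorem truncDyadic_nonneg (hx : 0 ≤ x) : 0 ≤ truncDyadic n x := by
  rw [truncDyadic_of_nonneg hx]
  positivity

theorem truncDyadic_le_self (hx : 0 ≤ x) : truncDyadic n x ≤ x := by
  rw [truncDyadic_of_nonneg hx, div_le_iff₀ (by positivity), mul_comm]
  calc (truncFloor n x : ℝ) ≤ ⌊2 ^ n * x⌋₊ := Nat.cast_le.2 (min_le_left _ _)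
    _ ≤ 2 ^ n * x := Nat.floor_le (by positivity)

theorem monotone_truncDyadic (hx : 0 ≤ x) : Monotone fun n => truncDyadic n x := by
  refine monotone_nat_of_le_succ fun n => ?_
  have hfloor : 2 * ⌊2 ^ n * x⌋₊ ≤ ⌊2 ^ (n + 1) * x⌋₊ := by
    refine Nat.le_floor ?_
    push_cast
    rw [pow_succ]
    nlinarith [Nat.floor_le (show 0 ≤ 2 ^ n * x by positivity)]
  have hcap : 2 * (n * 2 ^ n) ≤ (n + 1) * 2 ^ (n + 1) := by
    rw [pow_succ]
    nlinarith [Nat.zero_le (2 ^ n)]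
  have h : 2 * truncFloor n x ≤ truncFloor (n + 1) x := by
    unfold truncFloor
    exact le_min ((Nat.mul_le_mul_left 2 (min_le_left _ _)).trans hfloor)
      ((Nat.mul_le_mul_left 2 (min_le_right _ _)).trans (by exact_mod_cast hcap))
  simp only [truncDyadic_of_nonneg hx]
  rw [div_le_div_iff₀ (by positivity) (by positivity), pow_succ]
  have : (2 * truncFloor n x : ℝ) ≤ truncFloor (n + 1) x := by exact_mod_cast h
  nlinarith [show (0 : ℝ) < 2 ^ n by positivity]

theorem sub_inv_two_pow_le_truncDyadic (hx : 0 ≤ x) (hn : x ≤ n) :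
    x - (2 ^ n)⁻¹ ≤ truncDyadic n x := by
  have hcap : ⌊2 ^ n * x⌋₊ ≤ n * 2 ^ n :=
    Nat.floor_le_of_le (by push_cast; rw [mul_comm]; gcongr)
  rw [truncDyadic_of_nonneg hx, truncFloor, min_eq_left hcap, le_div_iff₀ (by positivity),
    sub_mul, inv_mul_cancel₀ (by positivity), mul_comm]
  exact (Nat.sub_one_lt_floor _).le

theorem tendsto_truncDyadic (x : ℝ) : Tendsto (fun n => truncDyadic n x) atTop (𝓝 x) := by
  wlog hx : 0 ≤ x generalizing x
  · simpa [truncDyadic_neg] using (this (-x) (by linarith)).neg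
  have hlow := tendsto_const_nhds (x := x).sub tendsto_inv_two_pow_atTop
  rw [sub_zero] at hlow
  refine tendsto_of_tendsto_of_tendsto_of_le_of_le' hlow tendsto_const_nhds ?_
    (Eventually.of_forall fun n => truncDyadic_le_self hx)
  filter_upwards [eventually_ge_atTop ⌈x⌉₊] with n hn
  exact sub_inv_two_pow_le_truncDyadic hx ((Nat.le_ceil x).trans (by exact_mod_cast hn))

theorem abs_truncDyadic_le (n : ℕ) (x : ℝ) : |truncDyadic n x| ≤ |x| := by
  wlog hx : 0 ≤ x generalizing x
  · simpa [truncDyadic_neg] using this (-x) (by linarith)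
  rw [abs_of_nonneg (truncDyadic_nonneg hx), abs_of_nonneg hx]
  exact truncDyadic_le_self hx

theorem monotone_or_antitone_truncDyadic (x : ℝ) :
    (Monotone fun n => truncDyadic n x) ∨ Antitone fun n => truncDyadic n x := by
  rcases le_total 0 x with hx | hx
  · exact Or.inl (monotone_truncDyadic hx)
  · refine Or.inr fun m n hmn => ?_
    have := monotone_truncDyadic (neg_nonneg.2 hx) hmn
    simp only [truncDyadic_neg] at this
    linarith

theorem truncDyadic_mem_range_ratCast (n : ℕ) (x : ℝ) :
    truncDyadic n x ∈ Set.range ((↑) : ℚ → ℝ) :=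
  ⟨((truncFloor n x : ℚ) - truncFloor n (-x)) / 2 ^ n, by simp [truncDyadic]⟩

theorem finite_range_truncDyadic (n : ℕ) : (Set.range (truncDyadic n)).Finite := by
  refine (((Set.finite_Iic (n * 2 ^ n)).prod (Set.finite_Iic (n * 2 ^ n))).image
    fun k : ℕ × ℕ => ((k.1 : ℝ) - k.2) / 2 ^ n).subset ?_
  rintro _ ⟨x, rfl⟩
  exact ⟨(truncFloor n x, truncFloor n (-x)),
    ⟨Set.mem_Iic.2 (min_le_right _ _), Set.mem_Iic.2 (min_le_right _ _)⟩, rfl⟩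

theorem measurable_truncDyadic (n : ℕ) : Measurable (truncDyadic n) := by
  unfold truncDyadic truncFloor
  fun_prop

end TruncDyadic

section RunMax

variable {Ω : Type*} {L L' : ℕ → Ω → ℝ} {t u : ℕ} {ω : Ω}

theorem runMax_self (L : ℕ → Ω → ℝ) (t : ℕ) (ω : Ω) : runMax L t t ω = L t ω := by
  simp [runMax]

theorem le_runMax {v : ℕ} (htv : t ≤ v) (hvu : v ≤ u) : L v ω ≤ runMax L t u ω :=
  (Finset.le_fold_max _).2 (Or.inr ⟨v, Finset.mem_Icc.2 ⟨htv, hvu⟩, le_rfl⟩)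

theorem runMax_le_runMax_add {d : ℝ} (htu : t ≤ u)
    (h : ∀ v, t ≤ v → v ≤ u → L v ω ≤ L' v ω + d) : runMax L t u ω ≤ runMax L' t u ω + d := by
  refine (Finset.fold_max_le _).2 ⟨?_, fun v hv => ?_⟩
  · linarith [h t le_rfl htu, le_runMax (L := L') (ω := ω) le_rfl htu]
  · obtain ⟨htv, hvu⟩ := Finset.mem_Icc.1 hv
    linarith [h v htv hvu, le_runMax (L := L') (ω := ω) htv hvu]

theorem runMax_congr (htu : t ≤ u) (h : ∀ v, t ≤ v → v ≤ u → L v ω = L' v ω) :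
    runMax L t u ω = runMax L' t u ω := by
  have h₁ := runMax_le_runMax_add (L := L) (L' := L') (d := 0) htu fun v htv hvu => by
    rw [h v htv hvu, add_zero]
  have h₂ := runMax_le_runMax_add (L := L') (L' := L) (d := 0) htu fun v htv hvu => by
    rw [h v htv hvu, add_zero]
  linarith

theorem slopesBetweenOn_runMax_update (htu : t ≤ u) (L : ℕ → Ω → ℝ) (ω : Ω) :
    SlopesBetweenOn (if u = t then 1 else 0) 1
      (fun ℓ => runMax (Function.update L t fun _ => ℓ) t u ω) Set.univ := by
  intro ℓ _ ℓ' _ hℓ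
  split_ifs with hut
  · subst hut
    simp only [runMax_self, Function.update_self]
    constructor <;> linarith
  have h₁ := runMax_le_runMax_add (L := Function.update L t fun _ => ℓ)
    (L' := Function.update L t fun _ => ℓ') (ω := ω) (d := 0) htu fun v _ _ => by
      simp only [Function.update_apply]; split_ifs <;> linarith
  have h₂ := runMax_le_runMax_add (L := Function.update L t fun _ => ℓ')
    (L' := Function.update L t fun _ => ℓ) (ω := ω) (d := ℓ' - ℓ) htu fun v _ _ => by
      simp only [Function.update_apply]; split_ifs <;> linarith
  dsimp only
  constructor <;> linarith

theorem runMax_induction {P : (Ω → ℝ) → Prop}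
    (hmax : ∀ g g' : Ω → ℝ, P g → P g' → P fun ω => max (g ω) (g' ω))
    (htu : t ≤ u) (h : ∀ v, t ≤ v → v ≤ u → P (L v)) : P (runMax L t u) := by
  classical
  suffices ∀ s ⊆ Finset.Icc t u, P fun ω => s.fold max (L t ω) fun v => L v ω from
    this _ subset_rfl
  intro s
  induction s using Finset.induction_on with
  | empty => exact fun _ => h t le_rfl htu
  | insert v s hv ih =>
    intro hs
    obtain ⟨htv, hvu⟩ := Finset.mem_Icc.1 (hs (Finset.mem_insert_self v s))
    simp only [Finset.fold_insert hv]
    exact hmax _ _ (h v htv hvu) (ih ((Finset.subset_insert v s).trans hs))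

variable {m : MeasurableSpace Ω}

theorem stronglyMeasurable_runMax (htu : t ≤ u)
    (h : ∀ v, t ≤ v → v ≤ u → StronglyMeasurable[m] (L v)) :
    StronglyMeasurable[m] (runMax L t u) :=
  runMax_induction (P := StronglyMeasurable[m]) (fun _ _ hg hg' => hg.sup hg') htu h

theorem memLp_runMax {μ : Measure Ω} (htu : t ≤ u) (h : ∀ v, t ≤ v → v ≤ u → MemLp (L v) 2 μ) :
    MemLp (runMax L t u) 2 μ :=
  runMax_induction (P := (MemLp · 2 μ)) (fun _ _ hg hg' => hg.sup hg') htu h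

end RunMax

section NonlinearExpectation

variable {Ω : Type*} {m0 : MeasurableSpace Ω} {μ : Measure Ω} {F : Filtration ℕ m0} {N t : ℕ}

structure IsCompAdmissible (μ : Measure Ω) (F : Filtration ℕ m0) (t N : ℕ) (f : ℝ → Ω → ℝ) :
    Prop where
  stronglyMeasurable_comp : ∀ L : Ω → ℝ, StronglyMeasurable[F t] L →
    StronglyMeasurable[F N] fun ω => f (L ω) ω
  memLp_comp : ∀ L : Ω → ℝ, StronglyMeasurable[F t] L → MemLp L 2 μ →
    MemLp (fun ω => f (L ω) ω) 2 μ

namespace IsCompAdmissible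

variable {f : ℝ → Ω → ℝ}

theorem stronglyMeasurable (hf : IsCompAdmissible μ F t N f) (ℓ : ℝ) :
    StronglyMeasurable[F N] (f ℓ) :=
  hf.stronglyMeasurable_comp _ stronglyMeasurable_const

theorem memLp [IsFiniteMeasure μ] (hf : IsCompAdmissible μ F t N f) (ℓ : ℝ) :
    MemLp (f ℓ) 2 μ :=
  hf.memLp_comp _ stronglyMeasurable_const (memLp_const ℓ)

end IsCompAdmissible

namespace NLExp

variable (EE : NLExp μ F N)

theorem E_congr_ae (ht : t ≤ N) {ξ η : Ω → ℝ}
    (hξ : StronglyMeasurable[F N] ξ) (hξi : MemLp ξ 2 μ)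
    (hη : StronglyMeasurable[F N] η) (hηi : MemLp η 2 μ) (h : ξ =ᵐ[μ] η) :
    EE.E t ξ =ᵐ[μ] EE.E t η :=
  (EE.mono t ht ξ η hξ hξi hη hηi h.le).antisymm (EE.mono t ht η ξ hη hηi hξ hξi h.symm.le)

theorem ae_E_le_add_const [IsFiniteMeasure μ] (ht : t ≤ N) {ξ η : Ω → ℝ} {d : ℝ}
    (hξ : StronglyMeasurable[F N] ξ) (hξi : MemLp ξ 2 μ)
    (hη : StronglyMeasurable[F N] η) (hηi : MemLp η 2 μ) (h : ∀ ω, ξ ω ≤ η ω + d) :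
    ∀ᵐ ω ∂μ, EE.E t ξ ω ≤ EE.E t η ω + d := by
  have hmono := EE.mono t ht ξ (η + fun _ => d) hξ hξi (hη.add stronglyMeasurable_const)
    (hηi.add (memLp_const d)) (ae_of_all _ h)
  have htrans := EE.translation t ht η (fun _ => d) hη hηi stronglyMeasurable_const
    (memLp_const d)
  filter_upwards [hmono, htrans] with ω hmono htrans
  exact hmono.trans_eq htrans

/-- The zero-one law, iterated over the finitely many level sets of `L`. -/
theorem E_comp_ae_eq_of_forall_mem [IsFiniteMeasure μ] (ht : t ≤ N) {f : ℝ → Ω → ℝ}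
    (hf : IsCompAdmissible μ F t N f) (s : Finset ℝ) {L : Ω → ℝ}
    (hL : StronglyMeasurable[F t] L) (hLs : ∀ ω, L ω ∈ s) :
    EE.E t (fun ω => f (L ω) ω) =ᵐ[μ] fun ω => EE.E t (f (L ω)) ω := by
  classical
  induction s using Finset.induction_on generalizing L with
  | empty => exact ae_of_all _ fun ω => absurd (hLs ω) (Finset.notMem_empty _)
  | insert v s hv ih =>
    rcases s.eq_empty_or_nonempty with rfl | ⟨w, hw⟩
    · obtain rfl : L = fun _ => v := funext fun ω => Finset.mem_singleton.1 (hLs ω)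
      rfl
    set A := L ⁻¹' {v}
    have hA : MeasurableSet[F t] A := hL.measurable (measurableSet_singleton v)
    set L' := A.piecewise (fun _ => w) L
    have hL' : StronglyMeasurable[F t] L' := stronglyMeasurable_const.piecewise hA hL
    have hL's : ∀ ω, L' ω ∈ s := by
      intro ω
      by_cases hω : ω ∈ A
      · simpa [L', hω] using hw
      · simpa [L', hω] using (Finset.mem_insert.1 (hLs ω)).resolve_left hω
    have hL'i : MemLp L' 2 μ :=
      MemLp.of_bound (hL'.mono (F.le t)).aestronglyMeasurable (∑ x ∈ s, |x|)
        (ae_of_all _ fun ω => Finset.single_le_sum (f := fun x => |x|)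
          (fun _ _ => abs_nonneg _) (hL's ω))
    have hsplit : (fun ω => f (L ω) ω) = A.indicator (f v) + Aᶜ.indicator fun ω => f (L' ω) ω := by
      funext ω
      by_cases hω : ω ∈ A
      · simp_all [A]
      · simp_all [A, L']
    filter_upwards [EE.zeroOne t ht _ _ (hf.stronglyMeasurable v) (hf.memLp v)
      (hf.stronglyMeasurable_comp L' hL') (hf.memLp_comp L' hL' hL'i) A hA, ih hL' hL's]
      with ω hzero hrest
    rw [hsplit, hzero]
    by_cases hω : ω ∈ A
    · simp_all [A]
    · simp_all [A, L']

end NLExp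

end NonlinearExpectation

section RegularVersion

open Topology

variable {Ω : Type*} {m0 : MeasurableSpace Ω} {μ : Measure Ω} [IsFiniteMeasure μ]
  {F : Filtration ℕ m0} {N t : ℕ} {f : ℝ → Ω → ℝ} {a c : ℝ}

namespace NLExp

variable (EE : NLExp μ F N)

def ratSlopesSet (t : ℕ) (f : ℝ → Ω → ℝ) (a c : ℝ) : Set Ω :=
  {ω | SlopesBetweenOn a c (fun x => EE.E t (f x) ω) (Set.range ((↑) : ℚ → ℝ))}

open Classical in
/-- A version of `ℓ ↦ E t [f ℓ]` that is continuous in `ℓ`; the junk value `a ℓ` off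
`ratSlopesSet` keeps its slopes in `[a, c]` at every `ω`. -/
noncomputable def regularVersion (t : ℕ) (f : ℝ → Ω → ℝ) (a c ℓ : ℝ) (ω : Ω) : ℝ :=
  if ω ∈ EE.ratSlopesSet t f a c then dyadicInf (fun x => EE.E t (f x) ω) ℓ else a * ℓ

theorem measurableSet_ratSlopesSet (ht : t ≤ N) (hf : IsCompAdmissible μ F t N f) :
    MeasurableSet[F t] (EE.ratSlopesSet t f a c) := by
  have hm x : Measurable[F t] (EE.E t (f x)) :=
    (EE.adapted t ht _ (hf.stronglyMeasurable x) (hf.memLp x)).measurable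
  simp only [ratSlopesSet, SlopesBetweenOn, Set.forall_mem_range, Set.ofPred_forall]
  exact .iInter fun p => .iInter fun q => .iInter fun _ =>
    (measurableSet_le measurable_const ((hm q).sub (hm p))).inter
      (measurableSet_le ((hm q).sub (hm p)) measurable_const)

theorem ae_mem_ratSlopesSet (ht : t ≤ N) (hf : IsCompAdmissible μ F t N f)
    (hslope : ∀ ω, SlopesBetweenOn a c (f · ω) Set.univ) :
    ∀ᵐ ω ∂μ, ω ∈ EE.ratSlopesSet t f a c := by
  simp only [ratSlopesSet, Set.mem_ofPred_eq, SlopesBetweenOn, Set.forall_mem_range]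
  refine ae_all_iff.2 fun p => ae_all_iff.2 fun q => ?_
  by_cases hpq : (p : ℝ) ≤ q
  · have hslope' ω := hslope ω (Set.mem_univ _) (Set.mem_univ _) hpq
    have hlow := EE.ae_E_le_add_const ht (d := -(a * (q - p))) (hf.stronglyMeasurable p)
      (hf.memLp p) (hf.stronglyMeasurable q) (hf.memLp q) fun ω => by linarith [(hslope' ω).1]
    have hupp := EE.ae_E_le_add_const ht (d := c * (q - p)) (hf.stronglyMeasurable q)
      (hf.memLp q) (hf.stronglyMeasurable p) (hf.memLp p) fun ω => by linarith [(hslope' ω).2]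
    filter_upwards [hlow, hupp] with ω hlow hupp _
    constructor <;> linarith
  · exact ae_of_all _ fun ω h => absurd h hpq

omit [IsFiniteMeasure μ] in
theorem regularVersion_eq (ha : 0 ≤ a) {ω : Ω} (hω : ω ∈ EE.ratSlopesSet t f a c) {x : ℝ}
    (hx : x ∈ Set.range ((↑) : ℚ → ℝ)) : EE.regularVersion t f a c x ω = EE.E t (f x) ω := by
  rw [regularVersion, if_pos hω, dyadicInf_eq ha hω hx]

omit [IsFiniteMeasure μ] in
theorem slopesBetweenOn_regularVersion (ha : 0 ≤ a) (hac : a ≤ c) (ω : Ω) :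
    SlopesBetweenOn a c (EE.regularVersion t f a c · ω) Set.univ := by
  by_cases hω : ω ∈ EE.ratSlopesSet t f a c
  · simp only [regularVersion, if_pos hω]
    exact slopesBetweenOn_dyadicInf ha hω
  · simp only [regularVersion, if_neg hω]
    intro x _ y _ hxy
    constructor <;> nlinarith

theorem measurable_regularVersion (ht : t ≤ N) (hf : IsCompAdmissible μ F t N f) (ℓ : ℝ) :
    Measurable[F t] (EE.regularVersion t f a c ℓ) :=
  Measurable.ite (EE.measurableSet_ratSlopesSet ht hf) (Measurable.iInf fun _ =>
    (EE.adapted t ht _ (hf.stronglyMeasurable _) (hf.memLp _)).measurable) measurable_const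

variable (ht : t ≤ N) (ha : 0 < a) (hf : IsCompAdmissible μ F t N f)
  (hslope : ∀ ω, SlopesBetweenOn a c (f · ω) Set.univ)
include ht ha hf hslope

/-- Holds for the finitely-valued approximations `truncDyadic n ∘ L` by the zero-one law, and
passes to the limit by monotone convergence on the left and continuity in `ℓ` on the right. -/
theorem E_comp_ae_eq_regularVersion {L : Ω → ℝ} (hL : StronglyMeasurable[F t] L)
    (hLi : MemLp L 2 μ) :
    EE.E t (fun ω => f (L ω) ω) =ᵐ[μ] fun ω => EE.regularVersion t f a c (L ω) ω := by
  set Ln : ℕ → Ω → ℝ := fun n ω => truncDyadic n (L ω)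
  have hLn (n : ℕ) : StronglyMeasurable[F t] (Ln n) :=
    ((measurable_truncDyadic n).comp hL.measurable).stronglyMeasurable
  have hLni (n : ℕ) : MemLp (Ln n) 2 μ :=
    hLi.of_le ((hLn n).mono (F.le t)).aestronglyMeasurable
      (ae_of_all _ fun ω => abs_truncDyadic_le n (L ω))
  have hlocal (n : ℕ) : EE.E t (fun ω => f (Ln n ω) ω) =ᵐ[μ] fun ω => EE.E t (f (Ln n ω)) ω :=
    EE.E_comp_ae_eq_of_forall_mem ht hf (finite_range_truncDyadic n).toFinset (hLn n)
      fun ω => (Set.Finite.mem_toFinset _).2 ⟨L ω, rfl⟩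
  have hlim := EE.monoConv t ht (fun n ω => f (Ln n ω) ω) (fun ω => f (L ω) ω)
    (fun n => hf.stronglyMeasurable_comp _ (hLn n)) (fun n => hf.memLp_comp _ (hLn n) (hLni n))
    (hf.stronglyMeasurable_comp L hL) (hf.memLp_comp L hL hLi)
    (ae_of_all _ fun ω => (monotone_or_antitone_truncDyadic (L ω)).imp
      (((hslope ω).strictMono ha).monotone.comp ·)
      (((hslope ω).strictMono ha).monotone.comp_antitone ·))
    (ae_of_all _ fun ω =>
      (((hslope ω).continuous ha.le).tendsto (L ω)).comp (tendsto_truncDyadic (L ω)))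
  filter_upwards [hlim, ae_all_iff.2 hlocal, EE.ae_mem_ratSlopesSet ht hf hslope]
    with ω hlim hlocal hω
  refine tendsto_nhds_unique hlim ?_
  have hversion n : EE.E t (fun ω => f (Ln n ω) ω) ω = EE.regularVersion t f a c (Ln n ω) ω :=
    (hlocal n).trans (EE.regularVersion_eq ha.le hω (truncDyadic_mem_range_ratCast _ _)).symm
  simp only [hversion]
  exact (((EE.slopesBetweenOn_regularVersion ha.le (hslope ω).lower_le_upper ω).continuous
    ha.le).tendsto (L ω)).comp (tendsto_truncDyadic (L ω))

theorem exists_E_comp_ae_eq {X : Ω → ℝ} (hX : StronglyMeasurable[F t] X) (hXi : MemLp X 2 μ) :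
    ∃ R : Ω → ℝ, StronglyMeasurable[F t] R ∧ MemLp R 2 μ ∧
      EE.E t (fun ω => f (R ω) ω) =ᵐ[μ] X := by
  set g := EE.regularVersion t f a c
  have hg ω : SlopesBetweenOn a c (g · ω) Set.univ :=
    EE.slopesBetweenOn_regularVersion ha.le (hslope ω).lower_le_upper ω
  set R : Ω → ℝ := fun ω => Function.invFun (g · ω) (X ω)
  have hgR ω : g (R ω) ω = X ω := Function.invFun_eq ((hg ω).surjective ha (X ω))
  have hR : StronglyMeasurable[F t] R := by
    refine (measurable_of_Iic fun b => ?_).stronglyMeasurable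
    have : R ⁻¹' Set.Iic b = {ω | X ω ≤ g b ω} := by
      ext ω
      simp only [Set.mem_preimage, Set.mem_Iic, Set.mem_ofPred_eq, ← hgR ω,
        ((hg ω).strictMono ha).le_iff_le]
    rw [this]
    exact measurableSet_le hX.measurable (EE.measurable_regularVersion ht hf b)
  have hg0 : MemLp (g 0) 2 μ := by
    refine (EE.sqInt t ht _ (hf.stronglyMeasurable 0) (hf.memLp 0)).ae_eq ?_
    filter_upwards [EE.ae_mem_ratSlopesSet ht hf hslope] with ω hω
    exact (EE.regularVersion_eq ha.le hω ⟨0, Rat.cast_zero⟩).symm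
  have hRi : MemLp R 2 μ := by
    refine ((hXi.norm.add hg0.norm).const_mul a⁻¹).of_le (hR.mono (F.le t)).aestronglyMeasurable
      (ae_of_all _ fun ω => ?_)
    have hbound := (hg ω).mul_abs_sub_le ha.le 0 (R ω)
    rw [hgR, sub_zero] at hbound
    show ‖R ω‖ ≤ ‖a⁻¹ * (‖X ω‖ + ‖g 0 ω‖)‖
    rw [Real.norm_eq_abs (R ω), Real.norm_of_nonneg (by positivity), le_inv_mul_iff₀ ha,
      Real.norm_eq_abs, Real.norm_eq_abs]
    linarith [abs_sub (X ω) (g 0 ω)]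
  exact ⟨R, hR, hRi, (EE.E_comp_ae_eq_regularVersion ht ha hf hslope hR hRi).trans
    (ae_of_all _ hgR)⟩

theorem ae_eq_of_E_comp_ae_eq {L₁ L₂ : Ω → ℝ}
    (hL₁ : StronglyMeasurable[F t] L₁) (hL₁i : MemLp L₁ 2 μ)
    (hL₂ : StronglyMeasurable[F t] L₂) (hL₂i : MemLp L₂ 2 μ)
    (h : EE.E t (fun ω => f (L₁ ω) ω) =ᵐ[μ] EE.E t fun ω => f (L₂ ω) ω) : L₁ =ᵐ[μ] L₂ := by
  filter_upwards [EE.E_comp_ae_eq_regularVersion ht ha hf hslope hL₁ hL₁i,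
    EE.E_comp_ae_eq_regularVersion ht ha hf hslope hL₂ hL₂i, h] with ω h₁ h₂ h
  exact ((EE.slopesBetweenOn_regularVersion ha.le (hslope ω).lower_le_upper ω).strictMono
    ha).injective (h₁.symm.trans (h.trans h₂))

end NLExp

end RegularVersion

section DiscountedPayoff

variable {Ω : Type*} {r : ℝ} {t N : ℕ} {L L' : ℕ → Ω → ℝ} {ω : Ω}

/-- The integrand of the representation at time `t`, written for the process `L = -K`. -/
noncomputable def discountedPayoff (r : ℝ) (t N : ℕ) (L : ℕ → Ω → ℝ) (ω : Ω) : ℝ :=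
  (∑ u ∈ Finset.Ico t N, r / (1 + r) * ((1 + r) ^ u)⁻¹ * runMax L t u ω)
    + ((1 + r) ^ N)⁻¹ * runMax L t N ω

theorem discountedPayoff_congr (htN : t ≤ N) (h : ∀ v, t ≤ v → v ≤ N → L v ω = L' v ω) :
    discountedPayoff r t N L ω = discountedPayoff r t N L' ω := by
  unfold discountedPayoff
  congr 1
  · refine Finset.sum_congr rfl fun u hu => ?_
    obtain ⟨htu, huN⟩ := Finset.mem_Ico.1 hu
    rw [runMax_congr htu fun v htv hvu => h v htv (hvu.trans huN.le)]
  · rw [runMax_congr htN h]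

theorem discountedPayoff_update_eq (htN : t ≤ N) (h : ∀ v, t < v → v ≤ N → L v ω = L' v ω) :
    discountedPayoff r t N (Function.update L t fun _ => L' t ω) ω =
      discountedPayoff r t N L' ω := by
  refine discountedPayoff_congr htN fun v htv hvN => ?_
  rcases eq_or_ne v t with rfl | hv
  · rw [Function.update_self]
  · rw [Function.update_of_ne hv]
    exact h v (lt_of_le_of_ne htv hv.symm) hvN

theorem discountedPayoff_update_comp (htN : t ≤ N) (R : Ω → ℝ) :
    (fun ω => discountedPayoff r t N (Function.update L t fun _ => R ω) ω)
      = discountedPayoff r t N (Function.update L t R) := by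
  funext ω
  simpa only [Function.update_self] using discountedPayoff_update_eq (r := r) (L := L)
    (L' := Function.update L t R) htN fun v htv _ => by rw [Function.update_of_ne htv.ne']

theorem stronglyMeasurable_discountedPayoff {m : MeasurableSpace Ω} (htN : t ≤ N)
    (h : ∀ v, t ≤ v → v ≤ N → StronglyMeasurable[m] (L v)) :
    StronglyMeasurable[m] (discountedPayoff r t N L) := by
  have hrun u (htu : t ≤ u) (huN : u ≤ N) : Measurable[m] (runMax L t u) :=
    (stronglyMeasurable_runMax htu fun v htv hvu => h v htv (hvu.trans huN)).measurable
  refine (Measurable.add (Finset.measurable_sum _ fun u hu => ?_)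
    ((hrun N htN le_rfl).const_mul _)).stronglyMeasurable
  obtain ⟨htu, huN⟩ := Finset.mem_Ico.1 hu
  exact (hrun u htu huN.le).const_mul _

theorem memLp_discountedPayoff {m : MeasurableSpace Ω} {μ : Measure Ω} (htN : t ≤ N)
    (h : ∀ v, t ≤ v → v ≤ N → MemLp (L v) 2 μ) : MemLp (discountedPayoff r t N L) 2 μ := by
  have hrun u (htu : t ≤ u) (huN : u ≤ N) : MemLp (runMax L t u) 2 μ :=
    memLp_runMax htu fun v htv hvu => h v htv (hvu.trans huN)
  refine MemLp.add (memLp_finsetSum _ fun u hu => ?_) ((hrun N htN le_rfl).const_mul _)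
  obtain ⟨htu, huN⟩ := Finset.mem_Ico.1 hu
  exact (hrun u htu huN.le).const_mul _

/-- The term `u = t` (or the final term when `t = N`) is linear in `ℓ`; all other terms are
nondecreasing and `1`-Lipschitz in `ℓ`. -/
theorem exists_slopesBetweenOn_discountedPayoff_update (hr : 0 < r) (htN : t ≤ N)
    (L : ℕ → Ω → ℝ) : ∃ a c, 0 < a ∧ ∀ ω, SlopesBetweenOn a c
      (fun ℓ => discountedPayoff r t N (Function.update L t fun _ => ℓ) ω) Set.univ := by
  classical
  set w : ℕ → ℝ := fun u => r / (1 + r) * ((1 + r) ^ u)⁻¹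
  have hw u : 0 ≤ w u := by positivity
  have hwN : (0 : ℝ) ≤ ((1 + r) ^ N)⁻¹ := by positivity
  refine ⟨(∑ u ∈ Finset.Ico t N, w u * if u = t then 1 else 0)
      + ((1 + r) ^ N)⁻¹ * (if N = t then 1 else 0), _, ?_, fun ω =>
    (SlopesBetweenOn.sum fun u hu =>
      (slopesBetweenOn_runMax_update (Finset.mem_Ico.1 hu).1 L ω).const_mul (hw u)).add
    ((slopesBetweenOn_runMax_update htN L ω).const_mul hwN)⟩
  simp only [mul_ite, mul_one, mul_zero, Finset.sum_ite_eq', Finset.mem_Ico, le_refl, true_and]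
  rcases htN.lt_or_eq with htN | rfl
  · simp only [htN, htN.ne', if_true, if_false, add_zero, w]
    positivity
  · simp only [lt_irrefl, if_false, if_true, zero_add]
    positivity

variable {m0 : MeasurableSpace Ω} {μ : Measure Ω} {F : Filtration ℕ m0}

theorem isCompAdmissible_discountedPayoff_update (htN : t ≤ N)
    (hL : ∀ v, t < v → v ≤ N → StronglyMeasurable[F v] (L v) ∧ MemLp (L v) 2 μ) :
    IsCompAdmissible μ F t N fun ℓ => discountedPayoff r t N (Function.update L t fun _ => ℓ) := by
  refine ⟨fun R hR => ?_, fun R hR hRi => ?_⟩ <;> rw [discountedPayoff_update_comp htN]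
  · refine stronglyMeasurable_discountedPayoff htN fun v htv hvN => ?_
    rcases eq_or_ne v t with rfl | hv
    · rw [Function.update_self]
      exact hR.mono (F.mono htN)
    · rw [Function.update_of_ne hv]
      exact (hL v (lt_of_le_of_ne htv hv.symm) hvN).1.mono (F.mono hvN)
  · refine memLp_discountedPayoff htN fun v htv hvN => ?_
    rcases eq_or_ne v t with rfl | hv
    · rwa [Function.update_self]
    · rw [Function.update_of_ne hv]
      exact (hL v (lt_of_le_of_ne htv hv.symm) hvN).2

end DiscountedPayoff

section Representation

variable {Ω : Type*} {m0 : MeasurableSpace Ω} {μ : Measure Ω} [IsFiniteMeasure μ]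
  {F : Filtration ℕ m0} {N t : ℕ} (EE : NLExp μ F N) {r : ℝ} (X : ℕ → Ω → ℝ)
  {L L₁ L₂ : ℕ → Ω → ℝ}

def Represents (EE : NLExp μ F N) (r : ℝ) (X L : ℕ → Ω → ℝ) (t : ℕ) : Prop :=
  StronglyMeasurable[F t] (L t) ∧ MemLp (L t) 2 μ ∧
    EE.E t (discountedPayoff r t N L) =ᵐ[μ] X t

omit [IsFiniteMeasure μ] in
theorem represents_update_iff_of_lt {v : ℕ} (R : Ω → ℝ) (htv : t < v) (hvN : v ≤ N) :
    Represents EE r X (Function.update L t R) v ↔ Represents EE r X L v := by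
  have hpayoff : discountedPayoff r v N (Function.update L t R) = discountedPayoff r v N L :=
    funext fun ω => discountedPayoff_congr hvN fun v' hvv' _ => by
      rw [Function.update_of_ne (htv.trans_le hvv').ne']
  rw [Represents, Represents, Function.update_of_ne htv.ne', hpayoff]

theorem exists_update_represents (hr : 0 < r) (htN : t ≤ N)
    (hL : ∀ v, t < v → v ≤ N → StronglyMeasurable[F v] (L v) ∧ MemLp (L v) 2 μ)
    (hX : StronglyMeasurable[F t] (X t)) (hXi : MemLp (X t) 2 μ) :
    ∃ R : Ω → ℝ, Represents EE r X (Function.update L t R) t := by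
  obtain ⟨a, c, ha, hslope⟩ := exists_slopesBetweenOn_discountedPayoff_update hr htN L
  obtain ⟨R, hR, hRi, hrep⟩ := EE.exists_E_comp_ae_eq htN ha
    (isCompAdmissible_discountedPayoff_update htN hL) hslope hX hXi
  refine ⟨R, ?_, ?_, ?_⟩
  · rwa [Function.update_self]
  · rwa [Function.update_self]
  · rwa [← discountedPayoff_update_comp htN]

theorem exists_forall_represents (hr : 0 < r)
    (hX : ∀ t ≤ N, StronglyMeasurable[F t] (X t)) (hXi : ∀ t ≤ N, MemLp (X t) 2 μ) :
    ∃ L : ℕ → Ω → ℝ, ∀ t ≤ N, Represents EE r X L t := by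
  suffices ∀ s ≤ N + 1, ∃ L : ℕ → Ω → ℝ, ∀ t, s ≤ t → t ≤ N → Represents EE r X L t by
    simpa using this 0 (Nat.zero_le _)
  intro s hs
  induction hs using Nat.decreasingInduction with
  | self => exact ⟨0, fun t ht htN => absurd ht (by omega)⟩
  | of_succ k hk ih =>
    obtain ⟨L, hL⟩ := ih
    have hkN : k ≤ N := by omega
    obtain ⟨R, hR⟩ := exists_update_represents EE X hr hkN
      (fun v hkv hvN => ⟨(hL v hkv hvN).1, (hL v hkv hvN).2.1⟩) (hX k hkN) (hXi k hkN)
    refine ⟨Function.update L k R, fun t hkt htN => ?_⟩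
    rcases hkt.eq_or_lt with rfl | hkt
    · exact hR
    · exact (represents_update_iff_of_lt EE X R hkt htN).2 (hL t hkt htN)

theorem ae_eq_of_represents (hr : 0 < r) (htN : t ≤ N)
    (h₁ : ∀ v, t ≤ v → v ≤ N → Represents EE r X L₁ v)
    (h₂ : ∀ v, t ≤ v → v ≤ N → Represents EE r X L₂ v)
    (hlt : ∀ v, t < v → v ≤ N → L₁ v =ᵐ[μ] L₂ v) : L₁ t =ᵐ[μ] L₂ t := by
  have hreg {L : ℕ → Ω → ℝ} (h : ∀ v, t ≤ v → v ≤ N → Represents EE r X L v) v (htv : t < v)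
      (hvN : v ≤ N) : StronglyMeasurable[F v] (L v) ∧ MemLp (L v) 2 μ :=
    ⟨(h v htv.le hvN).1, (h v htv.le hvN).2.1⟩
  obtain ⟨a, c, ha, hslope⟩ := exists_slopesBetweenOn_discountedPayoff_update hr htN L₁
  have hf := isCompAdmissible_discountedPayoff_update (r := r) htN (hreg h₁)
  have hf₂ := isCompAdmissible_discountedPayoff_update (r := r) htN (hreg h₂)
  obtain ⟨hL₁, hL₁i, hrep₁⟩ := h₁ t le_rfl htN
  obtain ⟨hL₂, hL₂i, hrep₂⟩ := h₂ t le_rfl htN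
  have hself {L : ℕ → Ω → ℝ} : (fun ω => discountedPayoff r t N
      (Function.update L t fun _ => L t ω) ω) = discountedPayoff r t N L :=
    funext fun ω => discountedPayoff_update_eq htN fun _ _ _ => rfl
  -- `L₂ t` also solves the equation for the field built from `L₁`, as `L₁ = L₂` a.s. after `t`.
  have hswap : (fun ω => discountedPayoff r t N (Function.update L₁ t fun _ => L₂ t ω) ω)
      =ᵐ[μ] discountedPayoff r t N L₂ := by
    filter_upwards [ae_all_iff.2 fun v => eventually_imp_distrib_left.2 fun htv =>
      eventually_imp_distrib_left.2 fun hvN => hlt v htv hvN] with ω hω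
    exact discountedPayoff_update_eq htN hω
  refine EE.ae_eq_of_E_comp_ae_eq htN ha hf hslope hL₁ hL₁i hL₂ hL₂i ?_
  rw [hself]
  refine hrep₁.trans (hrep₂.symm.trans (EE.E_congr_ae htN ?_ ?_
    (hf.stronglyMeasurable_comp _ hL₂) (hf.memLp_comp _ hL₂ hL₂i) hswap.symm))
  · exact hself ▸ hf₂.stronglyMeasurable_comp _ hL₂
  · exact hself ▸ hf₂.memLp_comp _ hL₂ hL₂i

theorem ae_eq_of_forall_represents (hr : 0 < r) (h₁ : ∀ t ≤ N, Represents EE r X L₁ t)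
    (h₂ : ∀ t ≤ N, Represents EE r X L₂ t) : ∀ t ≤ N, L₁ t =ᵐ[μ] L₂ t := by
  suffices ∀ s ≤ N + 1, ∀ t, s ≤ t → t ≤ N → L₁ t =ᵐ[μ] L₂ t from
    fun t htN => this 0 (Nat.zero_le _) t (Nat.zero_le t) htN
  intro s hs
  induction hs using Nat.decreasingInduction with
  | self => intro t ht htN; omega
  | of_succ k hk ih =>
    intro t hkt htN
    rcases hkt.eq_or_lt with rfl | hkt
    · exact ae_eq_of_represents EE X hr htN (fun v _ hvN => h₁ v hvN) (fun v _ hvN => h₂ v hvN)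
        fun v htv hvN => ih v htv hvN
    · exact ih t hkt htN

end Representation

theorem universal_process_exists_unique_general
{Ω : Type*}
    [m0 : MeasurableSpace Ω]
    (μ : Measure Ω) [IsProbabilityMeasure μ]
    (F : Filtration ℕ m0) (N : ℕ)
    (EE : NLExp μ F N)
    (r : ℝ) (hr : 0 < r)
    (S : ℕ → Ω → ℝ)
    (hS_adapted : ∀ t, t ≤ N → StronglyMeasurable[F t] (S t))
    (hS_sqInt : ∀ t, t ≤ N → MemLp (fun ω => ((1 + r) ^ t)⁻¹ * S t ω) 2 μ) :
    (∃ K : ℕ → Ω → ℝ,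
      (∀ t, t ≤ N → StronglyMeasurable[F t] (K t)) ∧
      (∀ t, t ≤ N → MemLp (K t) 2 μ) ∧
      ∀ t, t ≤ N →
        (fun ω => -(((1 + r) ^ t)⁻¹ * S t ω)) =ᵐ[μ] EE.E t fun ω =>
          (∑ u ∈ Finset.Ico t N,
            r / (1 + r) * ((1 + r) ^ u)⁻¹ * runMax (fun v ω' => -K v ω') t u ω)
          + ((1 + r) ^ N)⁻¹ * runMax (fun v ω' => -K v ω') t N ω) ∧
    ∀ K₁ K₂ : ℕ → Ω → ℝ,
      (∀ t, t ≤ N → StronglyMeasurable[F t] (K₁ t)) →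
      (∀ t, t ≤ N → MemLp (K₁ t) 2 μ) →
      (∀ t, t ≤ N →
        (fun ω => -(((1 + r) ^ t)⁻¹ * S t ω)) =ᵐ[μ] EE.E t fun ω =>
          (∑ u ∈ Finset.Ico t N,
            r / (1 + r) * ((1 + r) ^ u)⁻¹ * runMax (fun v ω' => -K₁ v ω') t u ω)
          + ((1 + r) ^ N)⁻¹ * runMax (fun v ω' => -K₁ v ω') t N ω) →
      (∀ t, t ≤ N → StronglyMeasurable[F t] (K₂ t)) →
      (∀ t, t ≤ N → MemLp (K₂ t) 2 μ) →
      (∀ t, t ≤ N →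
        (fun ω => -(((1 + r) ^ t)⁻¹ * S t ω)) =ᵐ[μ] EE.E t fun ω =>
          (∑ u ∈ Finset.Ico t N,
            r / (1 + r) * ((1 + r) ^ u)⁻¹ * runMax (fun v ω' => -K₂ v ω') t u ω)
          + ((1 + r) ^ N)⁻¹ * runMax (fun v ω' => -K₂ v ω') t N ω) →
      ∀ t, t ≤ N → K₁ t =ᵐ[μ] K₂ t := by
  set X : ℕ → Ω → ℝ := fun t ω => -(((1 + r) ^ t)⁻¹ * S t ω)
  have hX t (htN : t ≤ N) : StronglyMeasurable[F t] (X t) := ((hS_adapted t htN).const_mul _).neg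
  have hXi t (htN : t ≤ N) : MemLp (X t) 2 μ := (hS_sqInt t htN).neg
  have hrep (K : ℕ → Ω → ℝ) (hK : ∀ t ≤ N, StronglyMeasurable[F t] (K t))
      (hKi : ∀ t ≤ N, MemLp (K t) 2 μ)
      (hKrep : ∀ t ≤ N, X t =ᵐ[μ] EE.E t (discountedPayoff r t N fun v ω => -K v ω)) :
      ∀ t ≤ N, Represents EE r X (fun v ω => -K v ω) t :=
    fun t htN => ⟨(hK t htN).neg, (hKi t htN).neg, (hKrep t htN).symm⟩
  refine ⟨?_, fun K₁ K₂ hK₁ hK₁i hrep₁ hK₂ hK₂i hrep₂ t htN => ?_⟩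
  · obtain ⟨L, hL⟩ := exists_forall_represents EE X hr hX hXi
    refine ⟨fun v ω => -L v ω, fun t htN => (hL t htN).1.neg, fun t htN => (hL t htN).2.1.neg,
      fun t htN => ?_⟩
    simp only [neg_neg]
    exact (hL t htN).2.2.symm
  · filter_upwards [ae_eq_of_forall_represents EE X hr (hrep K₁ hK₁ hK₁i hrep₁)
      (hrep K₂ hK₂ hK₂i hrep₂) t htN] with ω h
    exact neg_injective h

/-- **Universal representation of the discounted asset price for American puts.**
There exists a unique (up to a.s. equality at each time) adapted, square-integrable
process `K` such that, for every `t ∈ {0,...,N}`,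
`-(1+r)^{-t} P_t = E t [ ∑_{u=t}^{N-1} (r/(1+r)) (1+r)^{-u} max_{t≤v≤u}(-K_v)
+ (1+r)^{-N} max_{t≤v≤N}(-K_v) ]` a.s. -/
theorem universal_process_exists_unique
{Ω : Type*} [TopologicalSpace Ω] [PolishSpace Ω]
    [m0 : MeasurableSpace Ω] [BorelSpace Ω]
    (μ : Measure Ω) [IsProbabilityMeasure μ]
    (F : Filtration ℕ m0) (N : ℕ) (hN : 1 ≤ N)
    (EE : NLExp μ F N)
    (r : ℝ) (hr : 0 < r)
    (S : ℕ → Ω → ℝ)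
    (hS_adapted : ∀ t, t ≤ N → StronglyMeasurable[F t] (S t))
    (hS_sqInt : ∀ t, t ≤ N → MemLp (fun ω => ((1 + r) ^ t)⁻¹ * S t ω) 2 μ) :
    (∃ K : ℕ → Ω → ℝ,
      (∀ t, t ≤ N → StronglyMeasurable[F t] (K t)) ∧
      (∀ t, t ≤ N → MemLp (K t) 2 μ) ∧
      ∀ t, t ≤ N →
        (fun ω => -(((1 + r) ^ t)⁻¹ * S t ω)) =ᵐ[μ] EE.E t fun ω =>
          (∑ u ∈ Finset.Ico t N,
            r / (1 + r) * ((1 + r) ^ u)⁻¹ * runMax (fun v ω' => -K v ω') t u ω)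
          + ((1 + r) ^ N)⁻¹ * runMax (fun v ω' => -K v ω') t N ω) ∧
    ∀ K₁ K₂ : ℕ → Ω → ℝ,
      (∀ t, t ≤ N → StronglyMeasurable[F t] (K₁ t)) →
      (∀ t, t ≤ N → MemLp (K₁ t) 2 μ) →
      (∀ t, t ≤ N →
        (fun ω => -(((1 + r) ^ t)⁻¹ * S t ω)) =ᵐ[μ] EE.E t fun ω =>
          (∑ u ∈ Finset.Ico t N,
            r / (1 + r) * ((1 + r) ^ u)⁻¹ * runMax (fun v ω' => -K₁ v ω') t u ω)
          + ((1 + r) ^ N)⁻¹ * runMax (fun v ω' => -K₁ v ω') t N ω) →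
      (∀ t, t ≤ N → StronglyMeasurable[F t] (K₂ t)) →
      (∀ t, t ≤ N → MemLp (K₂ t) 2 μ) →
      (∀ t, t ≤ N →
        (fun ω => -(((1 + r) ^ t)⁻¹ * S t ω)) =ᵐ[μ] EE.E t fun ω =>
          (∑ u ∈ Finset.Ico t N,
            r / (1 + r) * ((1 + r) ^ u)⁻¹ * runMax (fun v ω' => -K₂ v ω') t u ω)
          + ((1 + r) ^ N)⁻¹ * runMax (fun v ω' => -K₂ v ω') t N ω) →
      ∀ t, t ≤ N → K₁ t =ᵐ[μ] K₂ t :=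
  universal_process_exists_unique_general (m0 := m0) μ F N EE r hr S hS_adapted hS_sqInt
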